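/- arXiv:2302.03026 — 5 statements merged into one kernel-verified Lean document; each statement's English description precedes it below -/
import Mathlib

section
/- If a posterior estimator p̂ has coverage probability exactly 1 − α for every α, every x, and every positionable credible region generator (credible regions that are balls centered at arbitrary points θ_r, shrinking to {θ_r} as α → 1), and p̂(·|x) is continuous and strictly positive everywhere, and the true posterior p(·|x) is continuous, then p̂(θ|x) = p(θ|x) for all θ and x. -/
/-!
Every ball of positive radius has `p̂`-mass in `(0, 1]`: if the mass is below `1`, it is `1 - α`
for an admissible `α`; if it is `1`, positivity of `p̂` makes the complement null, so `p` gives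
the ball mass `1` as well. Either way `p` and `p̂` have the same integral over every ball
centred at `θ`. A continuous function with positive value at `θ` has positive integral over
small balls around `θ`, so the continuous difference `p̂ - p` must vanish at `θ`.
-/

open MeasureTheory Metric Set

section

variable {X : Type*} [MeasurableSpace X] {μ : Measure X}

lemma setIntegral_pos_of_forall_pos {f : X → ℝ} {s : Set X} (hs : MeasurableSet s)
    (hf : ∀ x ∈ s, 0 < f x) (hfi : IntegrableOn f s μ) (hμs : 0 < μ s) :
    0 < ∫ x in s, f x ∂μ :=
  (setIntegral_pos_iff_support_of_nonneg_ae (ae_restrict_of_forall_mem hs fun x hx => (hf x hx).le)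
    hfi).2 (hμs.trans_le (measure_mono fun x hx => ⟨(hf x hx).ne', hx⟩))

lemma setIntegral_eq_of_forall_coverage {f g : X → ℝ} {s : Set X} (hs : MeasurableSet s)
    (hμs : 0 < μ s) (hf_pos : ∀ x, 0 < f x) (hf_int : Integrable f μ) (hg_int : Integrable g μ)
    (hf_one : ∫ x, f x ∂μ = 1) (hg_one : ∫ x, g x ∂μ = 1)
    (hcov : ∀ α ∈ Ioo (0 : ℝ) 1, ∫ x in s, f x ∂μ = 1 - α → ∫ x in s, g x ∂μ = 1 - α) :
    ∫ x in s, g x ∂μ = ∫ x in s, f x ∂μ := by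
  have hf_split := integral_add_compl hs hf_int
  have hf_in : 0 < ∫ x in s, f x ∂μ :=
    setIntegral_pos_of_forall_pos hs (fun x _ => hf_pos x) hf_int.integrableOn hμs
  rcases eq_zero_or_pos (μ sᶜ) with hμc | hμc
  · have hg_split := integral_add_compl hs hg_int
    rw [setIntegral_measure_zero _ hμc] at hf_split hg_split
    linarith
  · have hf_out : 0 < ∫ x in sᶜ, f x ∂μ :=
      setIntegral_pos_of_forall_pos hs.compl (fun x _ => hf_pos x) hf_int.integrableOn hμc
    have := hcov (1 - ∫ x in s, f x ∂μ) ⟨by linarith, by linarith⟩ (by ring)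
    linarith

end

section

variable {X : Type*} [PseudoMetricSpace X] [MeasurableSpace X] [OpensMeasurableSpace X]
  {μ : Measure X} [μ.IsOpenPosMeasure]

lemma exists_setIntegral_closedBall_pos {f : X → ℝ} {x : X} (hf : ContinuousAt f x)
    (hfx : 0 < f x) (hfi : Integrable f μ) : ∃ R > 0, 0 < ∫ y in closedBall x R, f y ∂μ := by
  obtain ⟨R, hR, hball⟩ := nhds_basis_closedBall.mem_iff.1 (hf.eventually (lt_mem_nhds hfx))
  exact ⟨R, hR, setIntegral_pos_of_forall_pos measurableSet_closedBall hball hfi.integrableOn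
    (measure_closedBall_pos μ x hR)⟩

lemma le_of_forall_setIntegral_closedBall_eq {f g : X → ℝ} {x : X} (hf : ContinuousAt f x)
    (hg : ContinuousAt g x) (hfi : Integrable f μ) (hgi : Integrable g μ)
    (h : ∀ R > 0, ∫ y in closedBall x R, f y ∂μ = ∫ y in closedBall x R, g y ∂μ) :
    f x ≤ g x := by
  by_contra! hlt
  obtain ⟨R, hR, hpos⟩ :=
    exists_setIntegral_closedBall_pos (f := fun y => f y - g y) (hf.sub hg) (sub_pos.2 hlt)
      (hfi.sub hgi)
  rw [integral_sub hfi.integrableOn hgi.integrableOn, h R hR, sub_self] at hpos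
  exact hpos.false

lemma eq_of_forall_setIntegral_closedBall_eq {f g : X → ℝ} {x : X} (hf : ContinuousAt f x)
    (hg : ContinuousAt g x) (hfi : Integrable f μ) (hgi : Integrable g μ)
    (h : ∀ R > 0, ∫ y in closedBall x R, f y ∂μ = ∫ y in closedBall x R, g y ∂μ) :
    f x = g x :=
  le_antisymm (le_of_forall_setIntegral_closedBall_eq hf hg hfi hgi h)
    (le_of_forall_setIntegral_closedBall_eq hg hf hgi hfi fun R hR => (h R hR).symm)

end

theorem stmt1_general {n m : ℕ}
    (p phat : EuclideanSpace ℝ (Fin n) → EuclideanSpace ℝ (Fin m) → ℝ)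
    (hphat_cont : ∀ x, Continuous fun θ => phat θ x)
    (hphat_pos : ∀ θ x, 0 < phat θ x)
    (hp_cont : ∀ x, Continuous fun θ => p θ x)
    (hp_int : ∀ x, Integrable fun θ => p θ x)
    (hphat_int : ∀ x, Integrable fun θ => phat θ x)
    (hp_density : ∀ x, ∫ θ, p θ x = 1)
    (hphat_density : ∀ x, ∫ θ, phat θ x = 1)
    -- coverage probability equals 1 − α for every positionable (ball-shaped) credible region:
    (hcov : ∀ (θr : EuclideanSpace ℝ (Fin n)) (x : EuclideanSpace ℝ (Fin m)) (α : ℝ),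
      α ∈ Set.Ioo (0 : ℝ) 1 → ∀ R : ℝ, 0 < R →
        (∫ θ in Metric.closedBall θr R, phat θ x) = 1 - α →
        (∫ θ in Metric.closedBall θr R, p θ x) = 1 - α) :
    ∀ θ x, phat θ x = p θ x := by
  intro θ x
  refine eq_of_forall_setIntegral_closedBall_eq (f := (phat · x)) (g := (p · x))
    (hphat_cont x).continuousAt (hp_cont x).continuousAt (hphat_int x) (hp_int x) fun R hR => ?_
  exact (setIntegral_eq_of_forall_coverage measurableSet_closedBall
    (measure_closedBall_pos _ θ hR) (hphat_pos · x) (hphat_int x) (hp_int x) (hphat_density x)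
    (hp_density x) fun α hα => hcov θ x α hα R hR).symm

/-- If a posterior estimator p̂ has coverage probability exactly 1 − α for every
α ∈ (0,1), every x, and every positionable credible region generator (balls centered at arbitrary
points θ_r, shrinking to the center as α → 1), and p̂(·|x) is continuous and strictly positive
everywhere while the true posterior p(·|x) is continuous, then p̂(θ|x) = p(θ|x) for all θ, x. -/
theorem stmt1 {n m : ℕ}
    (p phat : EuclideanSpace ℝ (Fin n) → EuclideanSpace ℝ (Fin m) → ℝ)
    (hphat_cont : ∀ x, Continuous fun θ => phat θ x)
    (hphat_pos : ∀ θ x, 0 < phat θ x)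
    (hp_cont : ∀ x, Continuous fun θ => p θ x)
    (hp_nonneg : ∀ θ x, 0 ≤ p θ x)
    (hp_int : ∀ x, Integrable fun θ => p θ x)
    (hphat_int : ∀ x, Integrable fun θ => phat θ x)
    (hp_density : ∀ x, ∫ θ, p θ x = 1)
    (hphat_density : ∀ x, ∫ θ, phat θ x = 1)
    -- coverage probability equals 1 − α for every positionable (ball-shaped) credible region:
    (hcov : ∀ (θr : EuclideanSpace ℝ (Fin n)) (x : EuclideanSpace ℝ (Fin m)) (α : ℝ),
      α ∈ Set.Ioo (0 : ℝ) 1 → ∀ R : ℝ, 0 < R →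
        (∫ θ in Metric.closedBall θr R, phat θ x) = 1 - α →
        (∫ θ in Metric.closedBall θr R, p θ x) = 1 - α) :
    ∀ θ x, phat θ x = p θ x :=
  stmt1_general p phat hphat_cont hphat_pos hp_cont hp_int hphat_int hp_density hphat_density hcov
end

section
/- If the posterior estimator equals the prior, p̂(θ|x) = p(θ), then for DRP regions with reference points sampled from a distribution p̃(θ_r) independent of x, the expected coverage probability equals 1 − α for all α ∈ (0,1): the DRP test with x-independent reference points cannot detect the uninformative estimator. -/
/-!
Since the region `D_{θ_r}` is chosen independently of `x`, Fubini lets one integrate out `x` first;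
the likelihood `p(x|θ)` integrates to one, so the inner coverage is the prior mass of `D_{θ_r}`,
which is `1 - α` for every reference point, and averaging a constant over `p̃(θ_r)` returns it.
-/

open MeasureTheory

theorem integral_setIntegral_mul_eq_setIntegral {α β : Type*} [MeasurableSpace α]
    [MeasurableSpace β] {μ : Measure α} {ν : Measure β} [SFinite μ] [SFinite ν]
    {k : α → β → ℝ} {p : β → ℝ} (hk : ∀ θ, ∫ x, k x θ ∂μ = 1)
    (hint : Integrable (Function.uncurry fun x θ => k x θ * p θ) (μ.prod ν)) (s : Set β) :
    ∫ x, ∫ θ in s, k x θ * p θ ∂ν ∂μ = ∫ θ in s, p θ ∂ν := by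
  have hint_s : Integrable (Function.uncurry fun x θ => k x θ * p θ) (μ.prod (ν.restrict s)) := by
    rw [← Measure.restrict_univ (μ := μ), Measure.prod_restrict]
    exact hint.restrict
  rw [integral_integral_swap hint_s]
  simp only [integral_mul_const, hk, one_mul]

theorem stmt12_general {n m : ℕ} (α : ℝ)
    (prior : EuclideanSpace ℝ (Fin n) → ℝ)
    (like : EuclideanSpace ℝ (Fin m) → EuclideanSpace ℝ (Fin n) → ℝ)
    (pref : EuclideanSpace ℝ (Fin n) → ℝ)
    (R : EuclideanSpace ℝ (Fin n) → ℝ)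
    (hlike1 : ∀ θ, ∫ x, like x θ = 1)
    (hjoint_int : Integrable (Function.uncurry fun x θ => like x θ * prior θ))
    (hpref1 : ∫ θr, pref θr = 1)
    -- since p̂(·|x) = prior, the DRP ball D_{θ_r} does not depend on x and has prior mass 1 − α:
    (hD : ∀ θr, ∫ θ in Metric.closedBall θr (R θr), prior θ = 1 - α) :
    (∫ θr, pref θr *
      ∫ x, ∫ θ in Metric.closedBall θr (R θr), like x θ * prior θ) = 1 - α := by
  have hcoverage : ∀ θr, (∫ x, ∫ θ in Metric.closedBall θr (R θr), like x θ * prior θ) = 1 - α :=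
    fun θr => (integral_setIntegral_mul_eq_setIntegral hlike1 hjoint_int _).trans (hD θr)
  simp only [hcoverage, integral_mul_const, hpref1, one_mul]

/-- If the posterior estimator equals the prior, then for DRP regions with
reference points sampled from a distribution p̃(θ_r) independent of x, the expected coverage
probability equals 1 − α: ECP = E_{p̃(θ_r)} E_{p(x,θ)}[𝟙(θ ∈ D_{θ_r})] = 1 − α, where
D_{θ_r} is the ball centered at θ_r of prior mass 1 − α and p(x,θ) = p(x|θ) p(θ). -/
theorem stmt12 {n m : ℕ} (α : ℝ) (hα : α ∈ Set.Ioo (0 : ℝ) 1)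
    (prior : EuclideanSpace ℝ (Fin n) → ℝ)
    (like : EuclideanSpace ℝ (Fin m) → EuclideanSpace ℝ (Fin n) → ℝ)
    (pref : EuclideanSpace ℝ (Fin n) → ℝ)
    (R : EuclideanSpace ℝ (Fin n) → ℝ)
    (hprior_nonneg : ∀ θ, 0 ≤ prior θ) (hprior_int : Integrable prior)
    (hprior1 : ∫ θ, prior θ = 1)
    (hlike_nonneg : ∀ x θ, 0 ≤ like x θ)
    (hlike1 : ∀ θ, ∫ x, like x θ = 1)
    (hjoint_int : Integrable (Function.uncurry fun x θ => like x θ * prior θ))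
    (hpref_nonneg : ∀ θr, 0 ≤ pref θr) (hpref_int : Integrable pref)
    (hpref1 : ∫ θr, pref θr = 1)
    (hecp_int : Integrable (fun θr => pref θr *
      ∫ x, ∫ θ in Metric.closedBall θr (R θr), like x θ * prior θ))
    -- since p̂(·|x) = prior, the DRP ball D_{θ_r} does not depend on x and has prior mass 1 − α:
    (hD : ∀ θr, ∫ θ in Metric.closedBall θr (R θr), prior θ = 1 - α) :
    (∫ θr, pref θr *
      ∫ x, ∫ θ in Metric.closedBall θr (R θr), like x θ * prior θ) = 1 - α :=
  stmt12_general α prior like pref R hlike1 hjoint_int hpref1 hD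
end

section
/- Euler–Lagrange step: let F : V × U → ℝ be continuous with F(x, ·) differentiable, and suppose the integral ∫ p(x) F(x, θ_r(x)) dx is equal to a constant (independent of the choice of measurable function θ_r : V → U). If p(x) > 0 everywhere, then the gradient ∇_{θ_r} F(x, θ_r) vanishes for all x and θ_r. -/
open MeasureTheory

/-!
Comparing the position function that equals `u` on a measurable set `s` and `v` off it with the
constant position function `v` shows that `p · F(·, u)` and `p · F(·, v)` have the same integral
over every measurable set, hence agree almost everywhere. Since `p > 0` and `F` is continuous,
`F(x, u) = F(x, v)` for every `x`, so each `F x` is constant and its derivative vanishes.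
-/

section Variational

variable {X U : Type*} [MeasurableSpace X] [MeasurableSpace U] {μ : Measure X}

theorem ae_eq_of_integral_comp_eq_const {G : X → U → ℝ} {K : ℝ}
    (hint : ∀ θ : X → U, Measurable θ → Integrable (fun x => G x (θ x)) μ)
    (hconst : ∀ θ : X → U, Measurable θ → ∫ x, G x (θ x) ∂μ = K) (u v : U) :
    (fun x => G x u) =ᵐ[μ] fun x => G x v := by
  classical
  have hint_const : ∀ w : U, Integrable (fun x => G x w) μ := fun w =>
    hint (fun _ => w) measurable_const
  refine (hint_const u).ae_eq_of_forall_setIntegral_eq _ _ (hint_const v) fun s hs _ => ?_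
  have hθ : Measurable (s.piecewise (fun _ => u) fun _ => v) :=
    measurable_const.piecewise hs measurable_const
  have hsplit : ∀ w : U, ∫ x, G x (s.piecewise (fun _ => w) (fun _ => v) x) ∂μ =
      ∫ x in s, G x w ∂μ + ∫ x in sᶜ, G x v ∂μ := fun w => by
    have hcomp : (fun x => G x (s.piecewise (fun _ => w) (fun _ => v) x)) =
        s.piecewise (fun x => G x w) fun x => G x v := by
      funext x; by_cases hx : x ∈ s <;> simp [hx]
    rw [hcomp]
    exact integral_piecewise hs (hint_const w).integrableOn (hint_const v).integrableOn
  have hK_u := hsplit u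
  have hK_v := hsplit v
  rw [hconst _ hθ] at hK_u
  rw [Set.piecewise_same, hconst _ measurable_const] at hK_v
  linarith

theorem eq_of_weighted_integral_comp_eq_const [TopologicalSpace X] [μ.IsOpenPosMeasure]
    {p : X → ℝ} {F : X → U → ℝ} {K : ℝ} (hp_pos : ∀ x, 0 < p x)
    (hF_cont : ∀ u, Continuous fun x => F x u)
    (hint : ∀ θ : X → U, Measurable θ → Integrable (fun x => p x * F x (θ x)) μ)
    (hconst : ∀ θ : X → U, Measurable θ → ∫ x, p x * F x (θ x) ∂μ = K) (x : X) (u v : U) :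
    F x u = F x v := by
  have hweighted := ae_eq_of_integral_comp_eq_const (G := fun x w => p x * F x w) hint hconst u v
  have hae : (fun x => F x u) =ᵐ[μ] fun x => F x v := by
    filter_upwards [hweighted] with y hy
    exact mul_left_cancel₀ (hp_pos y).ne' hy
  exact congrFun (((hF_cont u).ae_eq_iff_eq μ (hF_cont v)).mp hae) x

end Variational

theorem stmt14_general {m k : ℕ}
    (p : EuclideanSpace ℝ (Fin m) → ℝ)
    (F : EuclideanSpace ℝ (Fin m) → EuclideanSpace ℝ (Fin k) → ℝ)
    (hp_pos : ∀ x, 0 < p x)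
    (hF_cont : Continuous fun q : EuclideanSpace ℝ (Fin m) × EuclideanSpace ℝ (Fin k) =>
      F q.1 q.2)
    (hint : ∀ θr : EuclideanSpace ℝ (Fin m) → EuclideanSpace ℝ (Fin k),
      Measurable θr → Integrable fun x => p x * F x (θr x))
    (K : ℝ)
    (hconst : ∀ θr : EuclideanSpace ℝ (Fin m) → EuclideanSpace ℝ (Fin k),
      Measurable θr → (∫ x, p x * F x (θr x)) = K) :
    ∀ x u, fderiv ℝ (F x) u = 0 := by
  intro x u
  have hF_slice : ∀ w, Continuous fun y => F y w := fun w =>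
    hF_cont.comp (continuous_id.prodMk continuous_const)
  have hFx : F x = fun _ => F x u := funext fun w =>
    eq_of_weighted_integral_comp_eq_const hp_pos hF_slice hint hconst x w u
  rw [hFx]
  exact fderiv_const_apply _

/-- Euler–Lagrange step: let F : V × U → ℝ be continuous with F(x, ·)
differentiable, and suppose ∫ p(x) F(x, θ_r(x)) dx takes the same value K for every measurable
position function θ_r : V → U. If p(x) > 0 everywhere, the gradient ∇_{θ_r} F(x, ·) vanishes
everywhere. -/
theorem stmt14 {m k : ℕ}
    (p : EuclideanSpace ℝ (Fin m) → ℝ)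
    (F : EuclideanSpace ℝ (Fin m) → EuclideanSpace ℝ (Fin k) → ℝ)
    (hp_pos : ∀ x, 0 < p x) (hp_int : Integrable p) (hp1 : ∫ x, p x = 1)
    (hF_cont : Continuous fun q : EuclideanSpace ℝ (Fin m) × EuclideanSpace ℝ (Fin k) =>
      F q.1 q.2)
    (hF_diff : ∀ x, Differentiable ℝ (F x))
    (hint : ∀ θr : EuclideanSpace ℝ (Fin m) → EuclideanSpace ℝ (Fin k),
      Measurable θr → Integrable fun x => p x * F x (θr x))
    (K : ℝ)
    (hconst : ∀ θr : EuclideanSpace ℝ (Fin m) → EuclideanSpace ℝ (Fin k),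
      Measurable θr → (∫ x, p x * F x (θr x)) = K) :
    ∀ x u, fderiv ℝ (F x) u = 0 :=
  stmt14_general p F hp_pos hF_cont hint K hconst
end

section
/- In the Gaussian lensing model, the time-dependent likelihood is tractable: if x = Aθ₀ + n with n ~ N(0, σ_n² I), the prior on θ₀ is N(μ₀, Σ₀), and θ = θ₀ + ε with ε ~ N(0, σ_t² I), then the conditional distribution of x given θ is Gaussian with mean A θ_c(θ) + A μ_c and covariance σ_n² I + A Σ_c Aᵀ, where Σ_c = (Σ₀⁻¹ + σ_t⁻² I)⁻¹ and θ_c(θ) = σ_t⁻² Σ_c θ (and μ_c = Σ_c Σ₀⁻¹ μ₀). -/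
/-!
Conditionally on `θ`, the prior `N(θ₀ | m, Σ_c)` times the likelihood `N(x | A θ₀, B)` is, in `θ₀`,
an unnormalised Gaussian with precision `P = Σ_c⁻¹ + Aᵀ B⁻¹ A`. Completing the square leaves the
quadratic form of `B⁻¹ - B⁻¹ A P⁻¹ Aᵀ B⁻¹ = (B + A Σ_c Aᵀ)⁻¹` (Woodbury) in `x - A m`, the Gaussian
integral over `θ₀` contributes `√((2π)ⁿ / det P)`, and the constants recombine through
`det (B + A Σ_c Aᵀ) = det B · det Σ_c · det P`. Finally `A m = A θ_c(θ) + A μ_c`.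
-/

open MeasureTheory Matrix

/-- The multivariate Gaussian density N(θ | μ, S) on ℝⁿ. -/
noncomputable def gaussianDensity {n : ℕ} (μ : Fin n → ℝ) (S : Matrix (Fin n) (Fin n) ℝ)
    (θ : Fin n → ℝ) : ℝ :=
  (Real.sqrt ((2 * Real.pi) ^ n * S.det))⁻¹ *
    Real.exp (-(1 / 2) * ((θ - μ) ⬝ᵥ (S⁻¹ *ᵥ (θ - μ))))

open Real

namespace Matrix

variable {ι κ R : Type*}

lemma PosDef.isSymm [Ring R] [PartialOrder R] [StarRing R] [TrivialStar R] {S : Matrix ι ι R}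
    (hS : S.PosDef) : S.IsSymm :=
  isHermitian_iff_isSymm.mp hS.isHermitian

variable [Fintype ι] [Fintype κ]

lemma mulVec_dotProduct [CommSemiring R] (A : Matrix κ ι R) (v : ι → R) (w : κ → R) :
    A *ᵥ v ⬝ᵥ w = v ⬝ᵥ Aᵀ *ᵥ w := by
  rw [dotProduct_transpose_mulVec, dotProduct_comm]

lemma IsSymm.dotProduct_mulVec_comm [CommSemiring R] {M : Matrix ι ι R} (hM : M.IsSymm)
    (u v : ι → R) : u ⬝ᵥ M *ᵥ v = v ⬝ᵥ M *ᵥ u := by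
  simpa only [hM.eq] using dotProduct_transpose_mulVec M u v

section CommRing

variable [CommRing R]

lemma IsSymm.sub_dotProduct_mulVec_sub {M : Matrix ι ι R} (hM : M.IsSymm) (u w : ι → R) :
    (u - w) ⬝ᵥ M *ᵥ (u - w) = u ⬝ᵥ M *ᵥ u - 2 * (w ⬝ᵥ M *ᵥ u) + w ⬝ᵥ M *ᵥ w := by
  rw [mulVec_sub, dotProduct_sub, sub_dotProduct, sub_dotProduct, hM.dotProduct_mulVec_comm u w]
  ring

lemma IsSymm.sub_inv_mulVec_dotProduct_mulVec_sub [DecidableEq ι] {P : Matrix ι ι R}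
    (hP : P.IsSymm) (hdet : IsUnit P.det) (v w : ι → R) :
    (v - P⁻¹ *ᵥ w) ⬝ᵥ P *ᵥ (v - P⁻¹ *ᵥ w) = v ⬝ᵥ P *ᵥ v - 2 * (v ⬝ᵥ w) + w ⬝ᵥ P⁻¹ *ᵥ w := by
  have hPinv : P⁻¹.IsSymm := by rw [IsSymm, transpose_nonsing_inv, hP.eq]
  rw [hP.sub_dotProduct_mulVec_sub, mulVec_mulVec, mul_nonsing_inv P hdet, one_mulVec,
    mulVec_dotProduct, hPinv.eq, mulVec_mulVec, nonsing_inv_mul P hdet, one_mulVec,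
    dotProduct_comm (P⁻¹ *ᵥ w), dotProduct_comm w v]

end CommRing

variable [DecidableEq ι] [DecidableEq κ]

lemma det_add_mul_mul_transpose {S : Matrix ι ι ℝ} {B : Matrix κ κ ℝ} (hS : S.PosDef)
    (hB : B.PosDef) (A : Matrix κ ι ℝ) :
    (B + A * S * Aᵀ).det = B.det * (S.det * (S⁻¹ + Aᵀ * B⁻¹ * A).det) := by
  rw [Matrix.mul_assoc, det_add_mul A (S * Aᵀ) hB.det_pos.ne'.isUnit, ← det_mul, Matrix.mul_add,
    mul_nonsing_inv S hS.det_pos.ne'.isUnit]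
  simp only [Matrix.mul_assoc]

lemma PosDef.inv_add_transpose_mul_inv_mul {S : Matrix ι ι ℝ} {B : Matrix κ κ ℝ} (hS : S.PosDef)
    (hB : B.PosDef) (A : Matrix κ ι ℝ) : (S⁻¹ + Aᵀ * B⁻¹ * A).PosDef := by
  refine hS.inv.add_posSemidef ?_
  simpa only [conjTranspose_eq_transpose_of_trivial] using
    hB.inv.posSemidef.conjTranspose_mul_mul_same A

/-- Completing the square in `v`; the Woodbury identity identifies the remainder with the
quadratic form of `(B + A S Aᵀ)⁻¹`. -/
lemma dotProduct_inv_mulVec_add_sub_dotProduct_inv_mulVec_sub {S : Matrix ι ι ℝ}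
    {B : Matrix κ κ ℝ} (hS : S.PosDef) (hB : B.PosDef) (A : Matrix κ ι ℝ) (v : ι → ℝ)
    (y : κ → ℝ) :
    v ⬝ᵥ S⁻¹ *ᵥ v + (y - A *ᵥ v) ⬝ᵥ B⁻¹ *ᵥ (y - A *ᵥ v) =
      (v - (S⁻¹ + Aᵀ * B⁻¹ * A)⁻¹ *ᵥ Aᵀ *ᵥ B⁻¹ *ᵥ y) ⬝ᵥ
          (S⁻¹ + Aᵀ * B⁻¹ * A) *ᵥ (v - (S⁻¹ + Aᵀ * B⁻¹ * A)⁻¹ *ᵥ Aᵀ *ᵥ B⁻¹ *ᵥ y) +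
        y ⬝ᵥ (B + A * S * Aᵀ)⁻¹ *ᵥ y := by
  set P := S⁻¹ + Aᵀ * B⁻¹ * A
  have hP := hS.inv_add_transpose_mul_inv_mul hB A
  have hwoodbury : (B + A * S * Aᵀ)⁻¹ = B⁻¹ - B⁻¹ * A * P⁻¹ * Aᵀ * B⁻¹ :=
    add_mul_mul_inv_eq_sub B A S Aᵀ hB.isUnit hS.isUnit hP.isUnit
  have hBinv := hB.inv.isSymm
  rw [hP.isSymm.sub_inv_mulVec_dotProduct_mulVec_sub hP.det_pos.ne'.isUnit, hwoodbury,
    hBinv.sub_dotProduct_mulVec_sub, sub_mulVec, dotProduct_sub]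
  simp only [P, add_mulVec, dotProduct_add, ← mulVec_mulVec, mulVec_dotProduct, transpose_transpose,
    hBinv.eq]
  ring

end Matrix

section GaussianIntegral

variable {ι : Type*} [Fintype ι]

lemma integral_exp_neg_half_dotProduct_self :
    ∫ z : ι → ℝ, exp (-(1 / 2) * (z ⬝ᵥ z)) = √((2 * π) ^ Fintype.card ι) := by
  have hprod (z : ι → ℝ) : exp (-(1 / 2) * (z ⬝ᵥ z)) = ∏ i, exp (-(1 / 2) * z i ^ 2) := by
    simp only [← exp_sum, dotProduct, Finset.mul_sum, sq]
  have hone : ∫ x : ℝ, exp (-(1 / 2) * x ^ 2) = √(2 * π) := by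
    rw [integral_gaussian]
    ring_nf
  have hpow : √(2 * π) ^ Fintype.card ι = √((2 * π) ^ Fintype.card ι) :=
    ((sqrt_eq_iff_mul_self_eq (by positivity) (by positivity)).mpr
      (by rw [← mul_pow, mul_self_sqrt (by positivity)])).symm
  simp only [hprod]
  rw [integral_fintype_prod_volume_eq_pow (fun x : ℝ ↦ exp (-(1 / 2) * x ^ 2)), hone, hpow]

variable [DecidableEq ι]

open scoped MatrixOrder in
/-- With `R = √Q`, the form `yᵀ Q y` is `|R y|²` and `R` rescales Lebesgue measure by
`|det R|⁻¹ = (det Q)^(-1/2)`. -/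
lemma integral_exp_neg_half_sub_dotProduct_mulVec_sub {Q : Matrix ι ι ℝ} (hQ : Q.PosDef)
    (c : ι → ℝ) :
    ∫ y : ι → ℝ, exp (-(1 / 2) * ((y - c) ⬝ᵥ Q *ᵥ (y - c))) =
      √((2 * π) ^ Fintype.card ι) / √Q.det := by
  rw [integral_sub_right_eq_self (fun y ↦ exp (-(1 / 2) * (y ⬝ᵥ Q *ᵥ y))) c]
  set R := CFC.sqrt Q
  have hRsymm : R.IsSymm :=
    isHermitian_iff_isSymm.mp (CFC.sqrt_nonneg Q).posSemidef.isHermitian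
  have hRR : R * R = Q := CFC.sqrt_mul_sqrt_self Q hQ.posSemidef.nonneg
  have hdet : R.det * R.det = Q.det := by rw [← det_mul, hRR]
  have hdetR : R.det ≠ 0 := fun h ↦ hQ.det_pos.ne' (by rw [← hdet, h, zero_mul])
  have hquad (y : ι → ℝ) : y ⬝ᵥ Q *ᵥ y = toLin' R y ⬝ᵥ toLin' R y := by
    rw [toLin'_apply, mulVec_dotProduct, hRsymm.eq, mulVec_mulVec, hRR]
  simp only [hquad]
  rw [← integral_map (φ := toLin' R) (f := fun z ↦ exp (-(1 / 2) * (z ⬝ᵥ z))) (by fun_prop)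
      (by fun_prop), map_matrix_volume_pi_eq_smul_volume_pi hdetR,
    integral_smul_measure, integral_exp_neg_half_dotProduct_self,
    ENNReal.toReal_ofReal (abs_nonneg _), abs_inv, ← sqrt_mul_self_eq_abs, hdet, smul_eq_mul,
    div_eq_inv_mul]

end GaussianIntegral

section GaussianDensity

variable {n m : ℕ}

lemma gaussianDensity_eq_centered (μ : Fin n → ℝ) (S : Matrix (Fin n) (Fin n) ℝ)
    (θ : Fin n → ℝ) : gaussianDensity μ S θ = gaussianDensity 0 S (θ - μ) := by
  rw [gaussianDensity, gaussianDensity, sub_zero]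

lemma integral_gaussianDensity_zero_mul_gaussianDensity_zero {S : Matrix (Fin n) (Fin n) ℝ}
    {B : Matrix (Fin m) (Fin m) ℝ} (hS : S.PosDef) (hB : B.PosDef) (A : Matrix (Fin m) (Fin n) ℝ)
    (y : Fin m → ℝ) :
    ∫ v, gaussianDensity 0 S v * gaussianDensity 0 B (y - A *ᵥ v) =
      gaussianDensity 0 (B + A * S * Aᵀ) y := by
  set P := S⁻¹ + Aᵀ * B⁻¹ * A with hP_def
  have hP : P.PosDef := hS.inv_add_transpose_mul_inv_mul hB A
  set c := P⁻¹ *ᵥ Aᵀ *ᵥ B⁻¹ *ᵥ y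
  have hjoint (v : Fin n → ℝ) : gaussianDensity 0 S v * gaussianDensity 0 B (y - A *ᵥ v) =
      (√((2 * π) ^ n * S.det))⁻¹ * (√((2 * π) ^ m * B.det))⁻¹ *
        exp (-(1 / 2) * (y ⬝ᵥ (B + A * S * Aᵀ)⁻¹ *ᵥ y)) *
        exp (-(1 / 2) * ((v - c) ⬝ᵥ P *ᵥ (v - c))) := by
    simp only [gaussianDensity, sub_zero]
    rw [mul_mul_mul_comm, ← exp_add, ← mul_add,
      dotProduct_inv_mulVec_add_sub_dotProduct_inv_mulVec_sub hS hB, mul_add, exp_add]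
    ring
  simp only [hjoint]
  rw [integral_const_mul, integral_exp_neg_half_sub_dotProduct_mulVec_sub hP, Fintype.card_fin,
    gaussianDensity, sub_zero, det_add_mul_mul_transpose hS hB, ← hP_def]
  have hS_det := hS.det_pos
  have hB_det := hB.det_pos
  have hP_det := hP.det_pos
  rw [sqrt_mul (by positivity), sqrt_mul (by positivity), sqrt_mul (by positivity),
    sqrt_mul (by positivity), sqrt_mul (by positivity)]
  field_simp

theorem integral_gaussianDensity_mul_gaussianDensity {S : Matrix (Fin n) (Fin n) ℝ}
    {B : Matrix (Fin m) (Fin m) ℝ} (hS : S.PosDef) (hB : B.PosDef) (A : Matrix (Fin m) (Fin n) ℝ)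
    (μ : Fin n → ℝ) (x : Fin m → ℝ) :
    ∫ u, gaussianDensity μ S u * gaussianDensity (A *ᵥ u) B x =
      gaussianDensity (A *ᵥ μ) (B + A * S * Aᵀ) x := by
  have hshift (u : Fin n → ℝ) : gaussianDensity μ S u * gaussianDensity (A *ᵥ u) B x =
      gaussianDensity 0 S (u - μ) * gaussianDensity 0 B (x - A *ᵥ μ - A *ᵥ (u - μ)) := by
    rw [gaussianDensity_eq_centered μ, gaussianDensity_eq_centered (A *ᵥ u), mulVec_sub,
      sub_sub_sub_cancel_right]
  simp only [hshift]
  rw [integral_sub_right_eq_self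
      (fun v ↦ gaussianDensity 0 S v * gaussianDensity 0 B (x - A *ᵥ μ - A *ᵥ v)),
    integral_gaussianDensity_zero_mul_gaussianDensity_zero hS hB, ← gaussianDensity_eq_centered]

end GaussianDensity

/-- tractable time-dependent likelihood in the Gaussian lensing model.
With x = Aθ₀ + noise (noise ~ N(0, σ_n² I)), prior θ₀ ~ N(μ₀, Σ₀), and θ = θ₀ + ε with
ε ~ N(0, σ_t² I), the conditional law of θ₀ given θ is N(Σ_c(σ_t⁻² θ + Σ₀⁻¹ μ₀), Σ_c) with
Σ_c = (Σ₀⁻¹ + σ_t⁻² I)⁻¹; marginalizing θ₀ gives that x | θ is Gaussian with mean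
A θ_c(θ) + A μ_c and covariance σ_n² I + A Σ_c Aᵀ, where θ_c(θ) = σ_t⁻² Σ_c θ and
μ_c = Σ_c Σ₀⁻¹ μ₀. -/
theorem stmt16 {n m : ℕ} (A : Matrix (Fin m) (Fin n) ℝ) (μ₀ : Fin n → ℝ)
    (S0 : Matrix (Fin n) (Fin n) ℝ) (hS0 : S0.PosDef)
    (σn σt : ℝ) (hσn : 0 < σn) (hσt : 0 < σt)
    (Sc : Matrix (Fin n) (Fin n) ℝ)
    (hSc : Sc = (S0⁻¹ + (σt ^ 2)⁻¹ • (1 : Matrix (Fin n) (Fin n) ℝ))⁻¹)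
    (θc : (Fin n → ℝ) → Fin n → ℝ)
    (hθc : ∀ θ, θc θ = (σt ^ 2)⁻¹ • (Sc *ᵥ θ))
    (μc : Fin n → ℝ) (hμc : μc = Sc *ᵥ (S0⁻¹ *ᵥ μ₀))
    (θ : Fin n → ℝ) (x : Fin m → ℝ) :
    (∫ θ₀ : Fin n → ℝ,
        gaussianDensity (Sc *ᵥ ((σt ^ 2)⁻¹ • θ + S0⁻¹ *ᵥ μ₀)) Sc θ₀ *
          gaussianDensity (A *ᵥ θ₀) (σn ^ 2 • (1 : Matrix (Fin m) (Fin m) ℝ)) x) =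
      gaussianDensity (A *ᵥ θc θ + A *ᵥ μc) (σn ^ 2 • 1 + A * Sc * Aᵀ) x := by
  have hSc_pos : Sc.PosDef := hSc ▸ (hS0.inv.add (PosDef.one.smul (by positivity))).inv
  have hnoise_pos : (σn ^ 2 • (1 : Matrix (Fin m) (Fin m) ℝ)).PosDef :=
    PosDef.one.smul (by positivity)
  have hmean : A *ᵥ θc θ + A *ᵥ μc = A *ᵥ (Sc *ᵥ ((σt ^ 2)⁻¹ • θ + S0⁻¹ *ᵥ μ₀)) := by
    simp only [hθc, hμc, mulVec_add, mulVec_smul]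
  rw [hmean]
  exact integral_gaussianDensity_mul_gaussianDensity hSc_pos hnoise_pos A _ x
end

section
/- Empirical DRP rank statistic is uniform for an optimal estimator: if θ* ~ p̂(·|x) and θ₁, …, θ_n are i.i.d. ~ p̂(·|x), all independent, and d(θ, θ_r) has a continuous distribution under p̂(·|x), then f := (1/n) Σⱼ 𝟙[d(θⱼ, θ_r) < d(θ*, θ_r)] satisfies P(f < 1 − α) → 1 − α as n → ∞, for any α ∈ (0,1). -/
open MeasureTheory Filter

/-!
If `θ*, θ₁, …, θₙ` are i.i.d., so are the distances `Xⱼ = d(θⱼ, θ_r)`, and the statistic `n f`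
is the rank of `X₀` among `X₀, …, Xₙ`. The joint law of `(X₀, …, Xₙ)` is invariant under
permutations of the coordinates, so each coordinate is equally likely to carry a given rank;
as the law of `X₀` has no atoms, ties are null and the ranks `0, …, n` are a.s. a permutation.
Hence the rank of `X₀` is uniform on `{0, …, n}`, `P(f < 1 - α) = ⌈n (1 - α)⌉ / (n + 1)`,
and this tends to `1 - α`.
-/

section Combinatorics

open Finset

variable {ι α : Type*} [Fintype ι] [LinearOrder α]

def strictRank (v : ι → α) (i : ι) : ℕ :=
  #{k | v k < v i}

lemma strictRank_lt_card (v : ι → α) (i : ι) : strictRank v i < Fintype.card ι :=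
  card_lt_univ_of_notMem (x := i) (by simp)

lemma strictRank_lt_strictRank {v : ι → α} {i j : ι} (h : v i < v j) :
    strictRank v i < strictRank v j :=
  card_lt_card <| (ssubset_iff_of_subset fun k hk => by
    simp only [mem_filter, mem_univ, true_and] at hk ⊢; exact hk.trans h).2
      ⟨i, by simp [h], by simp⟩

lemma strictRank_injective {v : ι → α} (hv : v.Injective) : (strictRank v).Injective := by
  intro i j hij
  rcases lt_trichotomy (v i) (v j) with h | h | h
  · exact absurd hij (strictRank_lt_strictRank h).ne
  · exact hv h
  · exact absurd hij (strictRank_lt_strictRank h).ne'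

lemma exists_strictRank_eq {v : ι → α} (hv : v.Injective) {r : ℕ} (hr : r < Fintype.card ι) :
    ∃ i, strictRank v i = r := by
  let toFin : ι → Fin (Fintype.card ι) := fun i => ⟨strictRank v i, strictRank_lt_card v i⟩
  have hinj : toFin.Injective := fun i j h => strictRank_injective hv (congrArg Fin.val h)
  obtain ⟨i, hi⟩ :=
    ((Fintype.bijective_iff_injective_and_card toFin).2 ⟨hinj, by simp⟩).2 ⟨r, hr⟩
  exact ⟨i, congrArg Fin.val hi⟩

lemma strictRank_comp_perm (v : ι → α) (σ : Equiv.Perm ι) (i : ι) :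
    strictRank (v ∘ σ) i = strictRank v (σ i) :=
  card_equiv σ fun k => by simp

lemma strictRank_zero_eq_card_range_filter (x : ℕ → α) (n : ℕ) :
    strictRank (fun i : Fin (n + 1) => x i) 0 = #{j ∈ range n | x (j + 1) < x 0} := by
  rw [strictRank, Fin.card_filter_univ_succ']
  simp only [Fin.val_zero, lt_irrefl, if_false, zero_add, Fin.val_succ]
  exact card_bij (fun i _ => i)
    (fun i hi => mem_filter.2 ⟨mem_range.2 i.isLt, (mem_filter.1 hi).2⟩) (by simp [Fin.val_inj])
    fun j hj => ⟨⟨j, mem_range.1 (mem_filter.1 hj).1⟩,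
      mem_filter.2 ⟨mem_univ _, (mem_filter.1 hj).2⟩, rfl⟩

end Combinatorics

lemma MeasureTheory.Measure.prod_diagonal_eq_zero {α : Type*} [MeasurableSpace α]
    [MeasurableEq α] (μ ν : Measure α) [SFinite ν] [NullSingletonClass ν] :
    μ.prod ν (Set.diagonal α) = 0 := by
  have fiber (x : α) : Prod.mk x ⁻¹' Set.diagonal α = {x} := by ext; simp [eq_comm]
  simp [Measure.prod_apply measurableSet_diagonal, fiber]

section IIDCoordinates

variable {ι α : Type*} [Fintype ι] [MeasurableSpace α] (ν : Measure α) [IsProbabilityMeasure ν]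

lemma measure_pi_eval_eq_eval_eq_zero [MeasurableEq α] [NullSingletonClass ν] {i j : ι}
    (hij : i ≠ j) :
    Measure.pi (fun _ : ι => ν) {v | v i = v j} = 0 := by
  have hindep : ProbabilityTheory.IndepFun (fun v : ι → α => v i) (fun v => v j)
      (Measure.pi fun _ => ν) :=
    (ProbabilityTheory.iIndepFun_pi (X := fun _ => id) fun _ => aemeasurable_id).indepFun hij
  have hlaw : (Measure.pi fun _ : ι => ν).map (fun v => (v i, v j)) = ν.prod ν := by
    rw [(ProbabilityTheory.indepFun_iff_map_prod_eq_prod_map_map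
      (measurable_pi_apply i).aemeasurable (measurable_pi_apply j).aemeasurable).1 hindep,
      (measurePreserving_eval _ i).map_eq, (measurePreserving_eval _ j).map_eq]
  have := Measure.prod_diagonal_eq_zero ν ν
  rw [← hlaw, Measure.map_apply ((measurable_pi_apply i).prodMk (measurable_pi_apply j))
    measurableSet_diagonal] at this
  exact this

lemma ae_injective_pi [MeasurableEq α] [NullSingletonClass ν] :
    ∀ᵐ v ∂Measure.pi (fun _ : ι => ν), v.Injective := by
  have hpairs : ∀ᵐ v ∂Measure.pi (fun _ : ι => ν), ∀ i j, i ≠ j → v i ≠ v j := by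
    refine ae_all_iff.2 fun i => ae_all_iff.2 fun j => ?_
    by_cases hij : i = j
    · simp [hij]
    · filter_upwards [measure_eq_zero_iff_ae_notMem.1 (measure_pi_eval_eq_eval_eq_zero ν hij)]
        with v hv using fun _ => hv
  filter_upwards [hpairs] with v hv i j
  exact not_imp_not.1 (hv i j)

lemma measurePreserving_comp_perm (σ : Equiv.Perm ι) :
    MeasurePreserving (fun v : ι → α => v ∘ σ) (Measure.pi fun _ => ν) (Measure.pi fun _ => ν) :=
  measurePreserving_arrowCongr' (fun _ => ν) (fun _ => ν) σ.symm (MeasurableEquiv.refl α)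
    fun _ => MeasurePreserving.id ν

end IIDCoordinates

section RankUniform

variable {ι α : Type*} [Fintype ι] [LinearOrder α] [TopologicalSpace α] [OrderClosedTopology α]
  [SecondCountableTopology α] [MeasurableSpace α] [OpensMeasurableSpace α]

lemma measurable_strictRank (i : ι) : Measurable fun v : ι → α => strictRank v i := by
  simp_rw [strictRank, Finset.card_filter]
  exact Finset.measurable_sum _ fun k _ => Measurable.ite
    (measurableSet_lt (measurable_pi_apply k) (measurable_pi_apply i)) measurable_const
    measurable_const

variable (ν : Measure α) [IsProbabilityMeasure ν] [NullSingletonClass ν]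

lemma measure_pi_strictRank_eq {r : ℕ} (hr : r < Fintype.card ι) (i : ι) :
    Measure.pi (fun _ : ι => ν) {v | strictRank v i = r} = 1 / Fintype.card ι := by
  classical
  set π := Measure.pi fun _ : ι => ν
  set A : ι → Set (ι → α) := fun i => {v | strictRank v i = r}
  have hA (j : ι) : MeasurableSet (A j) := measurable_strictRank j (measurableSet_singleton r)
  have hexch : ∀ j, π (A j) = π (A i) := fun j => by
    have hpre : (fun v => v ∘ Equiv.swap i j) ⁻¹' A i = A j := by
      ext v; simp [A, strictRank_comp_perm]
    rw [← hpre, (measurePreserving_comp_perm ν _).measure_preimage (hA i).nullMeasurableSet]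
  have hinj := ae_injective_pi (ι := ι) ν
  have hdisj : Pairwise fun j k => AEDisjoint π (A j) (A k) := fun j k hjk => by
    refine measure_eq_zero_iff_ae_notMem.2 ?_
    filter_upwards [hinj] with v hv ⟨hj, hk⟩
    exact hjk (strictRank_injective hv (hj.trans hk.symm))
  have hcover : π (⋃ j, A j) = 1 := by
    rw [← measure_univ (μ := π)]
    refine measure_congr (ae_eq_univ.2 (measure_eq_zero_iff_ae_notMem.2 ?_))
    filter_upwards [hinj] with v hv
    simpa [A] using exists_strictRank_eq hv hr
  rw [measure_iUnion₀ hdisj fun j => (hA j).nullMeasurableSet, tsum_fintype] at hcover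
  simp_rw [hexch, Finset.sum_const, Finset.card_univ, nsmul_eq_mul] at hcover
  rw [ENNReal.eq_div_iff (Nat.cast_ne_zero.2 (by omega)) (ENNReal.natCast_ne_top _), hcover]

lemma measure_pi_strictRank_lt {K : ℕ} (hK : K ≤ Fintype.card ι) (i : ι) :
    Measure.pi (fun _ : ι => ν) {v | strictRank v i < K} = K / Fintype.card ι := by
  set A : ℕ → Set (ι → α) := fun r => {v | strictRank v i = r}
  have hunion : {v : ι → α | strictRank v i < K} = ⋃ r ∈ Finset.range K, A r := by
    ext v; simp [A]
  have hdisj : Set.PairwiseDisjoint (Finset.range K) A := fun r _ r' _ h =>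
    Set.disjoint_left.2 fun v hv hv' => h (hv.symm.trans hv')
  rw [hunion,
    measure_biUnion_finset hdisj fun r _ => measurable_strictRank i (measurableSet_singleton r),
    Finset.sum_congr rfl fun r hr =>
      measure_pi_strictRank_eq ν ((Finset.mem_range.1 hr).trans_le hK) i]
  simp [div_eq_mul_inv]

end RankUniform

lemma ProbabilityTheory.iIndepFun.map_fin_eq_pi {Ω β : Type*} [MeasurableSpace Ω]
    [MeasurableSpace β] {μ : Measure Ω} {X : ℕ → Ω → β} (hX : ∀ j, Measurable (X j))
    (hindep : iIndepFun X μ) (hident : ∀ j, IdentDistrib (X j) (X 0) μ μ) (m : ℕ) :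
    μ.map (fun ω (i : Fin m) => X i ω) = Measure.pi fun _ => μ.map (X 0) := by
  have hfin : iIndepFun (fun i : Fin m => X i) μ := hindep.precomp Fin.val_injective
  rw [hfin.map_fun_eq_pi_map fun i : Fin m => (hX i).aemeasurable]
  simp_rw [(hident _).map_eq]

lemma tendsto_natCeil_mul_div_add_one {c : ℝ} (hc : 0 ≤ c) :
    Tendsto (fun n : ℕ => (⌈n * c⌉₊ : ℝ) / (n + 1)) atTop (nhds c) := by
  have hlower : Tendsto (fun n : ℕ => n * c / (n + 1)) atTop (nhds c) := by
    simpa [mul_comm, mul_div_assoc] using (tendsto_natCast_div_add_atTop (1 : ℝ)).const_mul c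
  have hupper : Tendsto (fun n : ℕ => (n * c + 1) / (n + 1)) atTop (nhds c) := by
    simpa [add_div] using hlower.add tendsto_one_div_add_atTop_nhds_zero_nat
  refine tendsto_of_tendsto_of_tendsto_of_le_of_le hlower hupper (fun n => ?_) fun n => ?_
  · exact div_le_div_of_nonneg_right (Nat.le_ceil _) (by positivity)
  · exact div_le_div_of_nonneg_right (Nat.ceil_lt_add_one (by positivity)).le (by positivity)

/-- empirical DRP rank statistic is asymptotically uniform for an optimal
estimator. If θ* = Y 0 and the posterior samples Y 1, Y 2, … are i.i.d. from p̂(·|x) (all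
independent and identically distributed), and the distance to the reference point θ_r has a
continuous (atomless) distribution, then
f_n := (1/n) Σ_{j=1}^n 𝟙[d(Y j, θ_r) < d(Y 0, θ_r)] satisfies
P(f_n < 1 − α) → 1 − α as n → ∞, for any α ∈ (0,1). -/
theorem stmt18 {S : Type*} [MetricSpace S] [MeasurableSpace S] [BorelSpace S]
    {Ω : Type*} [MeasurableSpace Ω] (μ : Measure Ω) [IsProbabilityMeasure μ]
    (Y : ℕ → Ω → S) (θr : S)
    (hmeas : ∀ j, Measurable (Y j))
    (hindep : ProbabilityTheory.iIndepFun Y μ)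
    (hident : ∀ j, ProbabilityTheory.IdentDistrib (Y j) (Y 0) μ μ)
    (hcont : ∀ c : ℝ, μ {ω | dist (Y 0 ω) θr = c} = 0)
    (α : ℝ) (hα : α ∈ Set.Ioo (0 : ℝ) 1) :
    Tendsto (fun n : ℕ =>
        (μ {ω | (((Finset.range n).filter
            (fun j => dist (Y (j + 1) ω) θr < dist (Y 0 ω) θr)).card : ℝ) / (n : ℝ)
          < 1 - α}).toReal)
      atTop (nhds (1 - α)) := by
  have hg : Measurable fun s : S => dist s θr := (continuous_id.dist continuous_const).measurable
  set X : ℕ → Ω → ℝ := fun j ω => dist (Y j ω) θr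
  have hX (j : ℕ) : Measurable (X j) := hg.comp (hmeas j)
  set ν := μ.map (X 0)
  have : IsProbabilityMeasure ν := Measure.isProbabilityMeasure_map (hX 0).aemeasurable
  have : NullSingletonClass ν :=
    ⟨fun c => by rw [Measure.map_apply (hX 0) (measurableSet_singleton c)]; exact hcont c⟩
  have hlaw := (hindep.comp _ fun _ => hg).map_fin_eq_pi hX fun j => (hident j).comp hg
  refine (tendsto_natCeil_mul_div_add_one (sub_nonneg.2 hα.2.le)).congr' ?_
  filter_upwards [eventually_gt_atTop 0] with n hn
  have hevent : {ω | (((Finset.range n).filter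
        (fun j => dist (Y (j + 1) ω) θr < dist (Y 0 ω) θr)).card : ℝ) / (n : ℝ) < 1 - α}
      = (fun ω (i : Fin (n + 1)) => X i ω) ⁻¹' {v | strictRank v 0 < ⌈n * (1 - α)⌉₊} := by
    ext ω
    have hrank := strictRank_zero_eq_card_range_filter (fun j => X j ω) n
    simp only [Set.mem_ofPred_eq, Set.mem_preimage, hrank, Nat.lt_ceil,
      div_lt_iff₀ (Nat.cast_pos.2 hn : (0 : ℝ) < n), mul_comm, X]
  have hK : ⌈n * (1 - α)⌉₊ ≤ Fintype.card (Fin (n + 1)) := by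
    rw [Fintype.card_fin, Nat.ceil_le]
    push_cast
    nlinarith [hα.1]
  have hB : MeasurableSet {v : Fin (n + 1) → ℝ | strictRank v 0 < ⌈n * (1 - α)⌉₊} :=
    measurable_strictRank 0 measurableSet_Iio
  rw [hevent, ← Measure.map_apply (measurable_pi_lambda _ fun i : Fin (n + 1) => hX i) hB, hlaw,
    measure_pi_strictRank_lt ν hK, ENNReal.toReal_div, Fintype.card_fin, ENNReal.toReal_natCast,
    ENNReal.toReal_natCast, Nat.cast_add_one]
end
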